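/- The number of well-labeled forests with σ trees and n total tree edges equals 3^n · (σ/(2n+σ)) · C(2n+σ, n). -/

import Mathlib

/-!
Cutting the first edge of the first tree of a forest (or deleting that tree when it is a single
vertex) is a bijection, which gives the recurrence `F(σ+1, n+1) = F(σ, n+1) + 3 F(σ+2, n)`:
the cut edge carries one of three increments, and its lower endpoint becomes the root of a new
tree. The ballot numbers `B(σ, n) = σ/(2n+σ) · C(2n+σ, n)` satisfy the same recurrence without
the factor `3`, and `F = 3^n B` on the boundary `F(0, n+1) = 0`, `F(σ+1, 0) = 1`.
-/

/-- Rooted plane trees whose edges carry integer label increments: a well-labeled tree is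
determined by its root label `0` together with the increment (in `{-1,0,1}`) along each edge. -/
inductive LTree : Type
  | node : List (ℤ × LTree) → LTree

mutual
  /-- Number of edges of a labeled plane tree. -/
  def LTree.edges : LTree → ℕ
    | .node ts => ts.length + LTree.edgesList ts
  /-- Total number of edges of a list of labeled subtrees. -/
  def LTree.edgesList : List (ℤ × LTree) → ℕ
    | [] => 0
    | (_, t) :: ts => LTree.edges t + LTree.edgesList ts
end

mutual
  /-- All edge label increments lie in `{-1, 0, 1}` (labels of adjacent vertices differ by at
  most `1`). -/
  def LTree.wellLabeled : LTree → Prop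
    | .node ts => LTree.wellLabeledList ts
  /-- `wellLabeled` for a list of labeled subtrees. -/
  def LTree.wellLabeledList : List (ℤ × LTree) → Prop
    | [] => True
    | (c, t) :: ts => (c = -1 ∨ c = 0 ∨ c = 1) ∧ LTree.wellLabeled t ∧ LTree.wellLabeledList ts
end

namespace LTree

@[simp]
theorem edges_node_nil : (node []).edges = 0 := by
  simp [edges, edgesList]

@[simp]
theorem edges_node_cons (c : ℤ) (t : LTree) (ts : List (ℤ × LTree)) :
    (node ((c, t) :: ts)).edges = t.edges + (node ts).edges + 1 := by
  simp only [edges, edgesList, List.length_cons]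
  omega

@[simp]
theorem wellLabeled_node_nil : (node []).wellLabeled := by
  simp [wellLabeled, wellLabeledList]

@[simp]
theorem wellLabeled_node_cons (c : ℤ) (t : LTree) (ts : List (ℤ × LTree)) :
    (node ((c, t) :: ts)).wellLabeled ↔
      (c = -1 ∨ c = 0 ∨ c = 1) ∧ t.wellLabeled ∧ (node ts).wellLabeled := by
  simp [wellLabeled, wellLabeledList]

theorem eq_node_nil_of_edges_eq_zero : ∀ t : LTree, t.edges = 0 → t = node []
  | node [], _ => rfl
  | node ((_, _) :: _), h => by simp at h

end LTree

def IsWellLabeledForest (σ n : ℕ) (f : List LTree) : Prop :=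
  f.length = σ ∧ (f.map LTree.edges).sum = n ∧ ∀ t ∈ f, t.wellLabeled

namespace IsWellLabeledForest

theorem cons_leaf_iff {σ n : ℕ} {f : List LTree} :
    IsWellLabeledForest (σ + 1) n (.node [] :: f) ↔ IsWellLabeledForest σ n f := by
  simp [IsWellLabeledForest]

theorem cons_node_cons_iff {σ n : ℕ} {c : ℤ} {t : LTree} {ts : List (ℤ × LTree)}
    {f : List LTree} :
    IsWellLabeledForest (σ + 1) (n + 1) (.node ((c, t) :: ts) :: f) ↔
      (c = -1 ∨ c = 0 ∨ c = 1) ∧ IsWellLabeledForest (σ + 2) n (t :: .node ts :: f) := by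
  simp only [IsWellLabeledForest, List.length_cons, List.map_cons, List.sum_cons,
    List.forall_mem_cons, LTree.edges_node_cons, LTree.wellLabeled_node_cons]
  constructor
  · rintro ⟨hlen, hsum, ⟨hc, ht, hts⟩, hf⟩
    exact ⟨hc, by omega, by omega, ht, hts, hf⟩
  · rintro ⟨hc, hlen, hsum, ht, hts, hf⟩
    exact ⟨by omega, by omega, ⟨hc, ht, hts⟩, hf⟩

theorem not_zero_succ {n : ℕ} {f : List LTree} : ¬IsWellLabeledForest 0 (n + 1) f := by
  rintro ⟨hlen, hsum, -⟩
  simp [List.length_eq_zero_iff.mp hlen] at hsum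

theorem zero_edges_iff {σ : ℕ} {f : List LTree} :
    IsWellLabeledForest σ 0 f ↔ f = List.replicate σ (.node []) := by
  constructor
  · rintro ⟨hlen, hsum, -⟩
    refine List.eq_replicate_iff.mpr ⟨hlen, fun t ht => LTree.eq_node_nil_of_edges_eq_zero t ?_⟩
    exact List.sum_eq_zero_iff.mp hsum _ (List.mem_map_of_mem ht)
  · rintro rfl
    refine ⟨List.length_replicate, ?_, fun t ht => ?_⟩
    · simp
    · simp [List.eq_of_mem_replicate ht]

end IsWellLabeledForest

abbrev WellLabeledForest (σ n : ℕ) := {f : List LTree // IsWellLabeledForest σ n f}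

abbrev Increment := {c : ℤ // c = -1 ∨ c = 0 ∨ c = 1}

theorem Increment.card : Nat.card Increment = 3 := by
  have e : Increment ≃ {c // c ∈ ({-1, 0, 1} : Finset ℤ)} :=
    Equiv.subtypeEquivRight (by simp)
  rw [Nat.card_congr e, Nat.card_eq_finsetCard]
  rfl

instance : Finite Increment :=
  Nat.finite_of_card_ne_zero (by rw [Increment.card]; norm_num)

namespace WellLabeledForest

instance (n : ℕ) : IsEmpty (WellLabeledForest 0 (n + 1)) :=
  ⟨fun f => IsWellLabeledForest.not_zero_succ f.2⟩

instance (σ : ℕ) : Unique (WellLabeledForest σ 0) where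
  default := ⟨_, IsWellLabeledForest.zero_edges_iff.mpr rfl⟩
  uniq f := Subtype.ext (IsWellLabeledForest.zero_edges_iff.mp f.2)

def consEquiv (σ n : ℕ) :
    WellLabeledForest (σ + 1) (n + 1) ≃
      WellLabeledForest σ (n + 1) ⊕ Increment × WellLabeledForest (σ + 2) n where
  toFun
    | ⟨[], h⟩ => absurd h.1 (by simp)
    | ⟨.node [] :: f, h⟩ => .inl ⟨f, IsWellLabeledForest.cons_leaf_iff.mp h⟩
    | ⟨.node ((c, t) :: ts) :: f, h⟩ =>
      have h' := IsWellLabeledForest.cons_node_cons_iff.mp h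
      .inr (⟨c, h'.1⟩, ⟨t :: .node ts :: f, h'.2⟩)
  invFun
    | .inl ⟨f, h⟩ => ⟨.node [] :: f, IsWellLabeledForest.cons_leaf_iff.mpr h⟩
    | .inr (_, ⟨[], h⟩) => absurd h.1 (by simp)
    | .inr (_, ⟨[_], h⟩) => absurd h.1 (by simp)
    | .inr (c, ⟨t :: .node ts :: f, h⟩) =>
      ⟨.node ((c.1, t) :: ts) :: f, IsWellLabeledForest.cons_node_cons_iff.mpr ⟨c.2, h⟩⟩
  left_inv := by
    rintro ⟨_ | ⟨⟨_ | ⟨⟨c, t⟩, ts⟩⟩, f⟩, h⟩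
    · exact absurd h.1 (by simp)
    · rfl
    · rfl
  right_inv := by
    rintro (⟨f, h⟩ | ⟨c, ⟨_ | ⟨t, _ | ⟨⟨ts⟩, f⟩⟩, h⟩⟩)
    · rfl
    · exact absurd h.1 (by simp)
    · exact absurd h.1 (by simp)
    · rfl

instance finite (σ n : ℕ) : Finite (WellLabeledForest σ n) := by
  induction n generalizing σ with
  | zero => infer_instance
  | succ n ihn =>
    induction σ with
    | zero => infer_instance
    | succ σ ihσ => exact Finite.of_equiv _ (consEquiv σ n).symm

theorem card_succ_succ (σ n : ℕ) :
    Nat.card (WellLabeledForest (σ + 1) (n + 1)) =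
      Nat.card (WellLabeledForest σ (n + 1)) + 3 * Nat.card (WellLabeledForest (σ + 2) n) := by
  rw [Nat.card_congr (consEquiv σ n), Nat.card_sum, Nat.card_prod, Increment.card]

end WellLabeledForest

noncomputable def ballot (σ n : ℕ) : ℝ :=
  σ / (2 * n + σ) * (2 * n + σ).choose n

theorem ballot_zero_succ (n : ℕ) : ballot 0 (n + 1) = 0 := by
  simp [ballot]

theorem ballot_zero_right {σ : ℕ} (hσ : 0 < σ) : ballot σ 0 = 1 := by
  simp [ballot, hσ.ne']

theorem ballot_succ_succ (σ n : ℕ) :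
    ballot (σ + 1) (n + 1) = ballot σ (n + 1) + ballot (σ + 2) n := by
  have hshift : ((2 * n + σ + 2).choose (n + 1) : ℝ) * (n + 1) =
      (2 * n + σ + 2).choose n * (n + σ + 2) := by
    have h := Nat.choose_succ_right_eq (2 * n + σ + 2) n
    rw [show 2 * n + σ + 2 - n = n + σ + 2 by omega] at h
    exact_mod_cast h
  simp only [ballot, Nat.cast_add, Nat.cast_ofNat, Nat.cast_one]
  rw [show 2 * (n + 1) + σ = 2 * n + σ + 2 by ring, show 2 * n + (σ + 2) = 2 * n + σ + 2 by ring,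
    show 2 * (n + 1) + (σ + 1) = 2 * n + σ + 2 + 1 by ring, Nat.choose_succ_succ']
  push_cast
  field_simp
  linear_combination 2 * (2 * n + σ + 2 : ℝ) * hshift

theorem eq_pow_mul_ballot_of_recurrence {F : ℕ → ℕ → ℝ} (c : ℝ)
    (hF_zero_succ : ∀ n, F 0 (n + 1) = 0) (hF_zero_right : ∀ σ, F σ 0 = 1)
    (hF_succ_succ : ∀ σ n, F (σ + 1) (n + 1) = F σ (n + 1) + c * F (σ + 2) n)
    {σ n : ℕ} (hσ : 0 < σ) : F σ n = c ^ n * ballot σ n := by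
  induction n generalizing σ with
  | zero => simp [hF_zero_right, ballot_zero_right hσ]
  | succ n ihn =>
    clear hσ
    induction σ with
    | zero => simp [hF_zero_succ, ballot_zero_succ]
    | succ σ ihσ =>
      rw [hF_succ_succ, ihσ, ihn (by omega), ballot_succ_succ]
      ring

/-- The number of well-labeled forests with `σ` trees and `n` total edges equals
`3^n · (σ/(2n+σ)) · C(2n+σ, n)`. -/
theorem card_well_labeled_forests (σ n : ℕ) (hσ : 0 < σ) :
    (Nat.card {f : List LTree //
        f.length = σ ∧ (f.map LTree.edges).sum = n ∧ ∀ t ∈ f, t.wellLabeled} : ℝ)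
      = 3 ^ n * ((σ : ℝ) / (2 * n + σ)) * (Nat.choose (2 * n + σ) n : ℝ) := by
  rw [mul_assoc]
  exact eq_pow_mul_ballot_of_recurrence (F := fun σ n => Nat.card (WellLabeledForest σ n))
    3 (fun _ => by simp) (fun _ => by simp)
    (fun σ n => by simp only [WellLabeledForest.card_succ_succ]; push_cast; ring) hσ
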